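/- arXiv:2103.04588 — 4 statements merged into one kernel-verified Lean document; each statement's English description precedes it below -/
import Mathlib

section
/- Let G be a group with finite symmetric generating set Γ and word length ρ, and let H = ⟨Γ × Γ⟩ ≤ G × G with word length ρ_H with respect to the generating set Γ × Γ. Then there exists m ∈ ℕ such that for all (g, h) ∈ H, max(ρ(g), ρ(h)) ≤ ρ_H((g, h)) ≤ max(ρ(g), ρ(h)) + m. -/
/-- The word length of `g` with respect to a generating set `Γ`. -/
noncomputable def wordLength {G : Type*} [Group G] (Γ : Set G) (g : G) : ℕ :=
  sInf {m : ℕ | ∃ l : List G, l.length = m ∧ (∀ x ∈ l, x ∈ Γ) ∧ l.prod = g}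

section Aux

variable {G : Type*} [Group G]

private lemma exists_word' (Γ : Set G) (hsym : Γ⁻¹ = Γ) {g : G}
    (hg : g ∈ Subgroup.closure Γ) :
    ∃ l : List G, (∀ x ∈ l, x ∈ Γ) ∧ l.prod = g := by
  have hg' : g ∈ Submonoid.closure (Γ ∪ Γ⁻¹) := by
    rw [← Subgroup.closure_toSubmonoid]; exact hg
  obtain ⟨l, hl, hp⟩ := Submonoid.exists_list_of_mem_closure hg'
  exact ⟨l, fun x hx => by rw [hsym, Set.union_self] at hl; exact hl x hx, hp⟩

private lemma list_prod_fst (l : List (G × G)) : l.prod.1 = (l.map Prod.fst).prod := by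
  induction l with
  | nil => rfl
  | cons a t ih => simp [ih]

private lemma list_prod_snd (l : List (G × G)) : l.prod.2 = (l.map Prod.snd).prod := by
  induction l with
  | nil => rfl
  | cons a t ih => simp [ih]

private lemma zip_word {Γ : Set G} {l1 l2 : List G} {T : ℕ} (h1 : l1.length = T)
    (h2 : l2.length = T) (m1 : ∀ x ∈ l1, x ∈ Γ) (m2 : ∀ x ∈ l2, x ∈ Γ) :
    ∃ L : List (G × G), L.length = T ∧ (∀ p ∈ L, p ∈ Γ ×ˢ Γ) ∧
      L.prod = (l1.prod, l2.prod) := by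
  refine ⟨l1.zip l2, by simp [h1, h2], ?_, ?_⟩
  · rintro ⟨a, b⟩ hab
    obtain ⟨ha, hb⟩ := List.of_mem_zip hab
    exact ⟨m1 a ha, m2 b hb⟩
  · have e1 : (l1.zip l2).map Prod.fst = l1 := List.map_fst_zip (by omega)
    have e2 : (l1.zip l2).map Prod.snd = l2 := List.map_snd_zip (by omega)
    exact Prod.ext (by rw [list_prod_fst, e1]) (by rw [list_prod_snd, e2])

private lemma pad_word {Γ : Set G} {u : List G} {g : G} {x : G} (hx : x ∈ Γ)
    (hx' : x⁻¹ ∈ Γ) (hu : ∀ y ∈ u, y ∈ Γ) (hup : u.prod = g) (k : ℕ) :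
    ∃ l : List G, l.length = u.length + 2 * k ∧ (∀ y ∈ l, y ∈ Γ) ∧ l.prod = g := by
  refine ⟨u ++ (List.replicate k x ++ List.replicate k x⁻¹), by simp; ring, ?_, ?_⟩
  · intro y hy
    simp only [List.mem_append, List.mem_replicate] at hy
    rcases hy with h | ⟨-, rfl⟩ | ⟨-, rfl⟩
    · exact hu y h
    · exact hx
    · exact hx'
  · simp [List.prod_replicate, hup, inv_pow, mul_inv_cancel]

/-- Reach any length of the form `n + e.length` where `e` is an odd relation. -/
private lemma reach_word {Γ : Set G} {u e : List G} {g : G} {x : G} {n : ℕ}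
    (hx : x ∈ Γ) (hx' : x⁻¹ ∈ Γ) (hem : ∀ y ∈ e, y ∈ Γ) (hep : e.prod = 1)
    (her : Odd e.length) (hu : ∀ y ∈ u, y ∈ Γ) (hup : u.prod = g)
    (hn : u.length ≤ n) :
    ∃ l : List G, l.length = n + e.length ∧ (∀ y ∈ l, y ∈ Γ) ∧ l.prod = g := by
  rcases Nat.even_or_odd (n - u.length) with he | ho
  · -- pad u ++ e by (n - u.length)
    obtain ⟨k, hk⟩ := he
    have hm : ∀ y ∈ u ++ e, y ∈ Γ := by
      intro y hy; rcases List.mem_append.mp hy with h | h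
      exacts [hu y h, hem y h]
    obtain ⟨l, hl1, hl2, hl3⟩ := pad_word hx hx' hm (by rw [List.prod_append, hup, hep, mul_one]) k
    exact ⟨l, by simp at hl1; omega, hl2, hl3⟩
  · -- n - u.length odd; pad u by (n - u.length + e.length) which is even
    obtain ⟨r, hr⟩ := her
    obtain ⟨j, hj⟩ := ho
    obtain ⟨l, hl1, hl2, hl3⟩ := pad_word hx hx' hu hup (j + r + 1)
    exact ⟨l, by omega, hl2, hl3⟩

private lemma word_parity {Γ : Set G} (hsym : Γ⁻¹ = Γ)
    (hrel : ∀ l : List G, (∀ x ∈ l, x ∈ Γ) → l.prod = 1 → Even l.length)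
    {u w : List G} {g : G} (hu : ∀ x ∈ u, x ∈ Γ) (hup : u.prod = g)
    (hw : ∀ x ∈ w, x ∈ Γ) (hwp : w.prod = g) : u.length % 2 = w.length % 2 := by
  have h := hrel (u ++ (w.map fun y => y⁻¹).reverse) ?_ ?_
  · simp only [List.length_append, List.length_reverse, List.length_map] at h
    rcases h with ⟨k, hk⟩; omega
  · intro y hy
    rcases List.mem_append.mp hy with h | h
    · exact hu y h
    · rw [List.mem_reverse, List.mem_map] at h
      obtain ⟨a, ha, rfl⟩ := h
      rw [← hsym]; exact Set.inv_mem_inv.mpr (hw a ha)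
  · rw [List.prod_append, ← List.prod_inv_reverse, hup, hwp, mul_inv_cancel]
end Aux

theorem wordLength_subgroup_prod_comparable {G : Type*} [Group G] (Γ : Set G)
    (hfin : Γ.Finite) (hne : Γ.Nonempty) (hsym : Γ⁻¹ = Γ)
    (hgen : Subgroup.closure Γ = ⊤) :
    ∃ m : ℕ, ∀ g h : G, (g, h) ∈ Subgroup.closure (Γ ×ˢ Γ) →
      max (wordLength Γ g) (wordLength Γ h) ≤ wordLength (Γ ×ˢ Γ) (g, h) ∧
      wordLength (Γ ×ˢ Γ) (g, h) ≤ max (wordLength Γ g) (wordLength Γ h) + m := by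
  classical
  obtain ⟨x, hx⟩ := hne
  have hx' : x⁻¹ ∈ Γ := by rw [← hsym]; exact Set.inv_mem_inv.mpr hx
  have inv_mem : ∀ y : G, y ∈ Γ → y⁻¹ ∈ Γ := fun y hy => hsym ▸ Set.inv_mem_inv.mpr hy
  have hsym2 : (Γ ×ˢ Γ)⁻¹ = Γ ×ˢ Γ := by
    ext ⟨a, b⟩
    simp only [Set.mem_inv, Set.mem_prod, Prod.fst_inv, Prod.snd_inv]
    constructor <;> rintro ⟨h1, h2⟩
    · exact ⟨inv_inv a ▸ inv_mem _ h1, inv_inv b ▸ inv_mem _ h2⟩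
    · exact ⟨inv_mem _ h1, inv_mem _ h2⟩
  -- basic API
  have wlE : ∀ g : G, ∃ l : List G, l.length = wordLength Γ g ∧ (∀ y ∈ l, y ∈ Γ) ∧
      l.prod = g := by
    intro g
    have hne' : {m : ℕ | ∃ l : List G, l.length = m ∧ (∀ y ∈ l, y ∈ Γ) ∧
        l.prod = g}.Nonempty := by
      obtain ⟨l, hl, hp⟩ := exists_word' Γ hsym (hgen ▸ Subgroup.mem_top g)
      exact ⟨l.length, l, rfl, hl, hp⟩
    exact Nat.sInf_mem hne'
  have wlLe : ∀ (g : G) (l : List G), (∀ y ∈ l, y ∈ Γ) → l.prod = g →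
      wordLength Γ g ≤ l.length := fun g l hm hp => Nat.sInf_le ⟨l, rfl, hm, hp⟩
  have wlLe2 : ∀ (p : G × G) (l : List (G × G)), (∀ y ∈ l, y ∈ Γ ×ˢ Γ) → l.prod = p →
      wordLength (Γ ×ˢ Γ) p ≤ l.length := fun p l hm hp => Nat.sInf_le ⟨l, rfl, hm, hp⟩
  -- lower bound, valid in all cases
  have lower : ∀ g h : G, (g, h) ∈ Subgroup.closure (Γ ×ˢ Γ) →
      max (wordLength Γ g) (wordLength Γ h) ≤ wordLength (Γ ×ˢ Γ) (g, h) := by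
    intro g h hmem
    have hne2 : {m : ℕ | ∃ l : List (G × G), l.length = m ∧ (∀ y ∈ l, y ∈ Γ ×ˢ Γ) ∧
        l.prod = (g, h)}.Nonempty := by
      obtain ⟨l, hl, hp⟩ := exists_word' (Γ ×ˢ Γ) hsym2 hmem
      exact ⟨l.length, l, rfl, hl, hp⟩
    obtain ⟨L, hL1, hL2, hL3⟩ := Nat.sInf_mem hne2
    have h1 : wordLength Γ g ≤ L.length := by
      rw [show L.length = (L.map Prod.fst).length by simp]
      refine wlLe g (L.map Prod.fst) ?_ (by rw [← list_prod_fst, hL3])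
      intro y hy
      rw [List.mem_map] at hy
      obtain ⟨p, hp, rfl⟩ := hy
      exact (hL2 p hp).1
    have h2 : wordLength Γ h ≤ L.length := by
      rw [show L.length = (L.map Prod.snd).length by simp]
      refine wlLe h (L.map Prod.snd) ?_ (by rw [← list_prod_snd, hL3])
      intro y hy
      rw [List.mem_map] at hy
      obtain ⟨p, hp, rfl⟩ := hy
      exact (hL2 p hp).2
    have hwl : wordLength (Γ ×ˢ Γ) (g, h) = L.length := hL1.symm
    rw [hwl]
    exact max_le h1 h2
  by_cases hodd : ∃ e : List G, Odd e.length ∧ (∀ y ∈ e, y ∈ Γ) ∧ e.prod = 1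
  · obtain ⟨e, her, hem, hep⟩ := hodd
    refine ⟨e.length, fun g h hmem => ⟨lower g h hmem, ?_⟩⟩
    obtain ⟨u, hu1, hu2, hu3⟩ := wlE g
    obtain ⟨w, hw1, hw2, hw3⟩ := wlE h
    set n := max (wordLength Γ g) (wordLength Γ h) with hn
    obtain ⟨l1, hl11, hl12, hl13⟩ :=
      reach_word hx hx' hem hep her hu2 hu3 (show u.length ≤ n by omega)
    obtain ⟨l2, hl21, hl22, hl23⟩ :=
      reach_word hx hx' hem hep her hw2 hw3 (show w.length ≤ n by omega)
    obtain ⟨L, hL1, hL2, hL3⟩ := zip_word (hl11.trans rfl) (hl21.trans rfl) hl12 hl22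
    have := wlLe2 (g, h) L hL2 (by rw [hL3, hl13, hl23])
    omega
  · push_neg at hodd
    have hrel : ∀ l : List G, (∀ y ∈ l, y ∈ Γ) → l.prod = 1 → Even l.length := by
      intro l h1 h2
      rcases Nat.even_or_odd l.length with he | ho
      · exact he
      · exact absurd h2 (hodd l ho h1)
    refine ⟨0, fun g h hmem => ⟨lower g h hmem, ?_⟩⟩
    obtain ⟨u, hu1, hu2, hu3⟩ := wlE g
    obtain ⟨w, hw1, hw2, hw3⟩ := wlE h
    set n := max (wordLength Γ g) (wordLength Γ h) with hn
    -- parity: u.length ≡ w.length [MOD 2]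
    obtain ⟨L, hL2, hL3⟩ := exists_word' (Γ ×ˢ Γ) hsym2 hmem
    have hgL : (L.map Prod.fst).prod = g := by rw [← list_prod_fst, hL3]
    have hhL : (L.map Prod.snd).prod = h := by rw [← list_prod_snd, hL3]
    have hmf : ∀ y ∈ L.map Prod.fst, y ∈ Γ := by
      intro y hy; rw [List.mem_map] at hy; obtain ⟨p, hp, rfl⟩ := hy; exact (hL2 p hp).1
    have hms : ∀ y ∈ L.map Prod.snd, y ∈ Γ := by
      intro y hy; rw [List.mem_map] at hy; obtain ⟨p, hp, rfl⟩ := hy; exact (hL2 p hp).2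
    have p1 := word_parity hsym hrel hu2 hu3 hmf hgL
    have p2 := word_parity hsym hrel hw2 hw3 hms hhL
    simp only [List.length_map] at p1 p2
    -- pad both to length n
    obtain ⟨l1, hl11, hl12, hl13⟩ := pad_word hx hx' hu2 hu3 ((n - u.length) / 2)
    obtain ⟨l2, hl21, hl22, hl23⟩ := pad_word hx hx' hw2 hw3 ((n - w.length) / 2)
    have e1 : l1.length = n := by omega
    have e2 : l2.length = n := by omega
    obtain ⟨LL, hLL1, hLL2, hLL3⟩ := zip_word e1 e2 hl12 hl22
    have := wlLe2 (g, h) LL hLL2 (by rw [hLL3, hl13, hl23])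
    omega
end

section
/- Let A and B be finite subsets of a group G carrying a transient symmetric random walk, and let Cap(A) = Σ_{g∈A} P_g(τ⁺_A = ∞) denote the capacity of A. Then Cap(A ∪ B) ≤ Cap(A) + Cap(B) − Cap(A ∩ B). -/
open Finset

/-- `transP Γ n g₁ g₂` is the `n`-step transition probability of the symmetric random
walk on `G` whose steps are uniform on `Γ`. -/
noncomputable def transP {G : Type*} [Group G] [DecidableEq G] (Γ : Finset G) :
    ℕ → G → G → ℝ
  | 0, g₁, g₂ => if g₁ = g₂ then 1 else 0
  | n + 1, g₁, g₂ => (Γ.card : ℝ)⁻¹ * ∑ γ ∈ Γ, transP Γ n (g₁ * γ) g₂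

/-- The position after `k` steps of the walk started at `g` driven by the word `w`. -/
def walkAt {G : Type*} [Group G] (g : G) {n : ℕ} (w : Fin n → G) (k : ℕ) : G :=
  g * ((List.ofFn w).take k).prod

/-- Probability that the walk started at `g` does not visit `A` at times `1, …, n`. -/
noncomputable def escProbN {G : Type*} [Group G] [DecidableEq G] (Γ A : Finset G)
    (g : G) (n : ℕ) : ℝ :=
  ((Γ.card : ℝ) ^ n)⁻¹ *
    ((Fintype.piFinset fun _ : Fin n => Γ).filter
      (fun w => ∀ k : Fin n, walkAt g w (k + 1) ∉ A)).card

/-- `escProb Γ A g = P_g(τ⁺_A = ∞)`, the probability of never returning to `A`. -/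
noncomputable def escProb {G : Type*} [Group G] [DecidableEq G] (Γ A : Finset G)
    (g : G) : ℝ :=
  ⨅ n : ℕ, escProbN Γ A g n

/-- The capacity of a finite set `A` with respect to the walk with step set `Γ`. -/
noncomputable def cap {G : Type*} [Group G] [DecidableEq G] (Γ A : Finset G) : ℝ :=
  ∑ g ∈ A, escProb Γ A g

open scoped Pointwise

namespace CapProof

variable {G : Type*} [grpG : Group G] [deqG : DecidableEq G]
include grpG deqG

/-- Words of length `m` with letters in `Γ`. -/
def W (Γ : Finset G) (m : ℕ) : Finset (Fin m → G) := Fintype.piFinset fun _ => Γ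

/-- Number of words of length `m` whose walk from `g` avoids `S` at times `1,…,m`. -/
def avoidCount (Γ S : Finset G) (g : G) (m : ℕ) : ℕ :=
  ((Fintype.piFinset fun _ : Fin m => Γ).filter
      (fun w => ∀ k : Fin m, walkAt g w (k + 1) ∉ S)).card

lemma escProbN_eq (Γ S : Finset G) (g : G) (m : ℕ) :
    escProbN Γ S g m = ((Γ.card : ℝ) ^ m)⁻¹ * avoidCount Γ S g m := rfl

lemma list_prod_mem_pow (Γ : Finset G) (l : List G) (h : ∀ x ∈ l, x ∈ Γ) :
    l.prod ∈ Γ ^ l.length := by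
  induction l with
  | nil => simp [Finset.mem_one]
  | cons a l ih =>
      rw [List.prod_cons, List.length_cons, pow_succ']
      exact Finset.mul_mem_mul (h a (by simp)) (ih fun x hx => h x (by simp [hx]))

lemma prod_take_mem_pow (Γ : Finset G) {n : ℕ} {w : Fin n → G} (hw : w ∈ W Γ n)
    {k : ℕ} (hk : k ≤ n) : ((List.ofFn w).take k).prod ∈ Γ ^ k := by
  have hlen : ((List.ofFn w).take k).length = k := by
    simp [List.length_take, hk]
  have := list_prod_mem_pow Γ ((List.ofFn w).take k) ?_
  · rwa [hlen] at this
  · intro x hx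
    have hx' : x ∈ List.ofFn w := List.mem_of_mem_take hx
    rw [List.mem_ofFn] at hx'
    obtain ⟨i, rfl⟩ := hx'
    exact (Fintype.mem_piFinset.1 hw) i

/-- split a word of length `k+m` into its two halves -/
lemma sum_split (Γ : Finset G) (k m : ℕ) (f : (Fin (k + m) → G) → ℕ) :
    ∑ w ∈ W Γ (k + m), f w = ∑ u ∈ W Γ k, ∑ v ∈ W Γ m, f (Fin.append u v) := by
  rw [← Finset.sum_product']
  refine Finset.sum_nbij' (fun w => ((fun i => w (Fin.castAdd m i)), (fun j => w (Fin.natAdd k j))))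
    (fun p => Fin.append p.1 p.2) ?_ ?_ ?_ ?_ ?_
  · intro w hw
    simp only [W, Fintype.mem_piFinset] at hw
    simp only [W, Finset.mem_product, Fintype.mem_piFinset]
    exact ⟨fun i => hw _, fun j => hw _⟩
  · intro p hp
    simp only [W, Finset.mem_product, Fintype.mem_piFinset] at hp
    simp only [W, Fintype.mem_piFinset]
    intro i
    refine Fin.addCases (fun i => ?_) (fun i => ?_) i
    · simpa [Fin.append_left] using hp.1 i
    · simpa [Fin.append_right] using hp.2 i
  · intro w hw
    funext i
    refine Fin.addCases (fun i => ?_) (fun i => ?_) i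
    · simp [Fin.append_left]
    · simp [Fin.append_right]
  · intro p hp
    ext i
    · simp [Fin.append_left]
    · simp [Fin.append_right]
  · intro w hw
    congr 1
    funext i
    refine Fin.addCases (fun i => ?_) (fun i => ?_) i
    · simp [Fin.append_left]
    · simp [Fin.append_right]

lemma card_W (Γ : Finset G) (m : ℕ) : (W Γ m).card = Γ.card ^ m := by
  simp [W, Fintype.card_piFinset]

lemma sum_drop (Γ : Finset G) (k m : ℕ) (f : List G → ℕ) :
    ∑ w ∈ W Γ (k + m), f ((List.ofFn w).drop k)
      = Γ.card ^ k * ∑ v ∈ W Γ m, f (List.ofFn v) := by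
  rw [sum_split Γ k m]
  have h : ∀ (u : Fin k → G) (v : Fin m → G),
      (List.ofFn (Fin.append u v)).drop k = List.ofFn v := by
    intro u v
    rw [List.ofFn_fin_append]
    have := (List.drop_left : List.drop (List.ofFn u).length (List.ofFn u ++ List.ofFn v) = List.ofFn v)
    simpa using this
  calc ∑ u ∈ W Γ k, ∑ v ∈ W Γ m, f ((List.ofFn (Fin.append u v)).drop k)
      = ∑ u ∈ W Γ k, ∑ v ∈ W Γ m, f (List.ofFn v) := by
        refine Finset.sum_congr rfl fun u _ => Finset.sum_congr rfl fun v _ => by rw [h]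
    _ = Γ.card ^ k * ∑ v ∈ W Γ m, f (List.ofFn v) := by
        rw [Finset.sum_const, card_W, smul_eq_mul]

lemma sum_take (Γ : Finset G) (k m : ℕ) (f : List G → ℕ) :
    ∑ w ∈ W Γ (k + m), f ((List.ofFn w).take k)
      = Γ.card ^ m * ∑ u ∈ W Γ k, f (List.ofFn u) := by
  rw [sum_split Γ k m]
  have h : ∀ (u : Fin k → G) (v : Fin m → G),
      (List.ofFn (Fin.append u v)).take k = List.ofFn u := by
    intro u v
    rw [List.ofFn_fin_append]
    have := (List.take_left : List.take (List.ofFn u).length (List.ofFn u ++ List.ofFn v) = List.ofFn u)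
    simpa using this
  calc ∑ u ∈ W Γ k, ∑ v ∈ W Γ m, f ((List.ofFn (Fin.append u v)).take k)
      = ∑ u ∈ W Γ k, ∑ v ∈ W Γ m, f (List.ofFn u) := by
        refine Finset.sum_congr rfl fun u _ => Finset.sum_congr rfl fun v _ => by rw [h]
    _ = Γ.card ^ m * ∑ u ∈ W Γ k, f (List.ofFn u) := by
        rw [Finset.sum_comm, Finset.sum_const, card_W, smul_eq_mul]

lemma lastExit_decomp (S : Finset G) (g : G) {n : ℕ} (w : Fin n → G) :
    (if ∃ k : Fin (n+1), walkAt g w (k : ℕ) ∈ S then (1:ℕ) else 0)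
      = ∑ k ∈ range (n+1),
          if walkAt g w k ∈ S ∧ ∀ j : Fin (n+1), k < (j : ℕ) → walkAt g w (j : ℕ) ∉ S
            then (1:ℕ) else 0 := by
  by_cases h : ∃ k : Fin (n+1), walkAt g w (k : ℕ) ∈ S
  · set T := (range (n+1)).filter (fun k => walkAt g w k ∈ S) with hT
    have hTne : T.Nonempty := by
      obtain ⟨k, hk⟩ := h
      exact ⟨(k : ℕ), Finset.mem_filter.2 ⟨Finset.mem_range.2 k.isLt, hk⟩⟩
    set k0 := T.max' hTne with hk0
    have hk0T : k0 ∈ T := T.max'_mem hTne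
    have hk0S : walkAt g w k0 ∈ S := (Finset.mem_filter.1 hk0T).2
    have hk0r : k0 ∈ range (n+1) := (Finset.mem_filter.1 hk0T).1
    have hfilter : (range (n+1)).filter
        (fun k => walkAt g w k ∈ S ∧ ∀ j : Fin (n+1), k < (j : ℕ) → walkAt g w (j : ℕ) ∉ S)
          = {k0} := by
      ext k
      simp only [Finset.mem_filter, Finset.mem_singleton]
      constructor
      · rintro ⟨hk, hkS, hafter⟩
        have hkT : k ∈ T := Finset.mem_filter.2 ⟨hk, hkS⟩
        have hle : k ≤ k0 := T.le_max' k hkT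
        rcases lt_or_eq_of_le hle with hlt | heq
        · exact absurd hk0S
            (hafter ⟨k0, Finset.mem_range.1 hk0r⟩ hlt)
        · exact heq
      · rintro rfl
        refine ⟨hk0r, hk0S, ?_⟩
        intro j hlt hjS
        have hjT : (j : ℕ) ∈ T :=
          Finset.mem_filter.2 ⟨Finset.mem_range.2 j.isLt, hjS⟩
        exact absurd (T.le_max' _ hjT) (not_le.2 hlt)
    have hcf : ∑ k ∈ range (n+1),
        (if walkAt g w k ∈ S ∧ ∀ j : Fin (n+1), k < (j : ℕ) → walkAt g w (j : ℕ) ∉ S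
          then (1:ℕ) else 0)
        = ((range (n+1)).filter
            (fun k => walkAt g w k ∈ S ∧
              ∀ j : Fin (n+1), k < (j : ℕ) → walkAt g w (j : ℕ) ∉ S)).card :=
      (Finset.card_filter _ _).symm
    rw [if_pos h, hcf, hfilter, Finset.card_singleton]
  · rw [if_neg h]
    symm
    apply Finset.sum_eq_zero
    intro k hk
    rw [if_neg]
    rintro ⟨hkS, -⟩
    exact h ⟨⟨k, Finset.mem_range.1 hk⟩, hkS⟩

lemma sum_lastexit (S F : Finset G) {n : ℕ} (k : ℕ) (w : Fin n → G)
    (hmem : ∀ h ∈ S, h * (((List.ofFn w).take k).prod)⁻¹ ∈ F) :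
    ∑ g ∈ F, (if walkAt g w k ∈ S ∧ ∀ j : Fin (n+1), k < (j : ℕ) → walkAt g w (j : ℕ) ∉ S
        then (1:ℕ) else 0)
      = ∑ h ∈ S, (if ∀ j : Fin (n+1), k < (j : ℕ) →
          h * (((List.ofFn w).drop k).take ((j : ℕ) - k)).prod ∉ S then (1:ℕ) else 0) := by
  set c := ((List.ofFn w).take k).prod with hc
  have hwalkk : ∀ g : G, walkAt g w k = g * c := fun g => rfl
  have hwalk : ∀ (g : G) (j : ℕ), k < j →
      walkAt g w j = g * c * (((List.ofFn w).drop k).take (j - k)).prod := by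
    intro g j hj
    have hj' : j = k + (j - k) := (Nat.add_sub_cancel' hj.le).symm
    conv_lhs => rw [hj']
    rw [walkAt, List.take_add, List.prod_append, ← mul_assoc, hc]
  have hcond : ∀ g : G,
      ((walkAt g w k ∈ S ∧ ∀ j : Fin (n+1), k < (j : ℕ) → walkAt g w (j : ℕ) ∉ S)
        ↔ (g * c ∈ S ∧ ∀ j : Fin (n+1), k < (j : ℕ) →
            g * c * (((List.ofFn w).drop k).take ((j : ℕ) - k)).prod ∉ S)) := by
    intro g
    rw [hwalkk]
    refine and_congr Iff.rfl (forall_congr' fun j => imp_congr_right fun hkj => ?_)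
    rw [hwalk g (j : ℕ) hkj]
  have step1 : (∑ g ∈ F, if walkAt g w k ∈ S ∧
        ∀ j : Fin (n+1), k < (j : ℕ) → walkAt g w (j : ℕ) ∉ S then (1:ℕ) else 0)
      = ∑ g ∈ F, if g * c ∈ S ∧ ∀ j : Fin (n+1), k < (j : ℕ) →
          g * c * (((List.ofFn w).drop k).take ((j : ℕ) - k)).prod ∉ S then (1:ℕ) else 0 :=
    Finset.sum_congr rfl fun g _ => if_congr (hcond g) rfl rfl
  rw [step1]
  rw [← Finset.sum_image (g := fun g => g * c)
    (f := fun h => if h ∈ S ∧ ∀ j : Fin (n+1), k < (j : ℕ) →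
      h * (((List.ofFn w).drop k).take ((j : ℕ) - k)).prod ∉ S then (1:ℕ) else 0)
    (fun x _ y _ hxy => mul_right_cancel hxy)]
  have hsub : S ⊆ F.image (fun g => g * c) := by
    intro h hh
    exact Finset.mem_image.2 ⟨h * c⁻¹, hmem h hh, by rw [inv_mul_cancel_right]⟩
  rw [← Finset.sum_subset hsub (fun x _ hx => if_neg (fun hand => hx hand.1))]
  refine Finset.sum_congr rfl fun h hh => ?_
  simp [hh]

/-- Number of words of length `n` whose walk from `g` visits `S` at some time `0,…,n`. -/
def hitC (Γ S : Finset G) (g : G) (n : ℕ) : ℕ :=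
  ((W Γ n).filter (fun w => ∃ k : Fin (n+1), walkAt g w (k : ℕ) ∈ S)).card

lemma hitC_card_ineq (Γ A B : Finset G) (g : G) (n : ℕ) :
    hitC Γ (A ∪ B) g n + hitC Γ (A ∩ B) g n ≤ hitC Γ A g n + hitC Γ B g n := by
  have hun : (W Γ n).filter (fun w => ∃ k : Fin (n+1), walkAt g w (k : ℕ) ∈ A ∪ B)
      = (W Γ n).filter (fun w => ∃ k : Fin (n+1), walkAt g w (k : ℕ) ∈ A)
        ∪ (W Γ n).filter (fun w => ∃ k : Fin (n+1), walkAt g w (k : ℕ) ∈ B) := by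
    ext w
    simp only [Finset.mem_filter, Finset.mem_union]
    constructor
    · rintro ⟨hwW, k, hkAB⟩
      rcases hkAB with h | h
      exacts [Or.inl ⟨hwW, k, h⟩, Or.inr ⟨hwW, k, h⟩]
    · rintro (⟨hwW, k, h⟩ | ⟨hwW, k, h⟩)
      exacts [⟨hwW, k, Or.inl h⟩, ⟨hwW, k, Or.inr h⟩]
  have hin : (W Γ n).filter (fun w => ∃ k : Fin (n+1), walkAt g w (k : ℕ) ∈ A ∩ B)
      ⊆ ((W Γ n).filter (fun w => ∃ k : Fin (n+1), walkAt g w (k : ℕ) ∈ A))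
        ∩ ((W Γ n).filter (fun w => ∃ k : Fin (n+1), walkAt g w (k : ℕ) ∈ B)) := by
    intro w hw
    rw [Finset.mem_filter] at hw
    obtain ⟨hwW, k, hkAB⟩ := hw
    rw [Finset.mem_inter] at hkAB
    exact Finset.mem_inter.2 ⟨Finset.mem_filter.2 ⟨hwW, k, hkAB.1⟩,
      Finset.mem_filter.2 ⟨hwW, k, hkAB.2⟩⟩
  calc hitC Γ (A ∪ B) g n + hitC Γ (A ∩ B) g n
      ≤ hitC Γ (A ∪ B) g n
        + (((W Γ n).filter (fun w => ∃ k : Fin (n+1), walkAt g w (k : ℕ) ∈ A))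
          ∩ ((W Γ n).filter (fun w => ∃ k : Fin (n+1), walkAt g w (k : ℕ) ∈ B))).card :=
        Nat.add_le_add_left (Finset.card_le_card hin) _
    _ = hitC Γ A g n + hitC Γ B g n := by
        rw [hitC, hitC, hitC, hun]
        exact Finset.card_union_add_card_inter _ _

lemma sum_hitC (Γ S F : Finset G) (n : ℕ)
    (hF : ∀ h ∈ S, ∀ k ≤ n, ∀ c ∈ Γ ^ k, h * c⁻¹ ∈ F) :
    ∑ g ∈ F, hitC Γ S g n
      = ∑ k ∈ range (n+1), Γ.card ^ k * ∑ h ∈ S, avoidCount Γ S h (n - k) := by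
  calc ∑ g ∈ F, hitC Γ S g n
      = ∑ g ∈ F, ∑ w ∈ W Γ n,
          (if ∃ k : Fin (n+1), walkAt g w (k : ℕ) ∈ S then (1:ℕ) else 0) :=
        Finset.sum_congr rfl fun g _ => Finset.card_filter _ _
    _ = ∑ g ∈ F, ∑ w ∈ W Γ n, ∑ k ∈ range (n+1),
          (if walkAt g w k ∈ S ∧ ∀ j : Fin (n+1), k < (j : ℕ) → walkAt g w (j : ℕ) ∉ S
            then (1:ℕ) else 0) :=
        Finset.sum_congr rfl fun g _ => Finset.sum_congr rfl fun w _ =>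
          lastExit_decomp S g w
    _ = ∑ w ∈ W Γ n, ∑ k ∈ range (n+1), ∑ g ∈ F,
          (if walkAt g w k ∈ S ∧ ∀ j : Fin (n+1), k < (j : ℕ) → walkAt g w (j : ℕ) ∉ S
            then (1:ℕ) else 0) := by
        rw [Finset.sum_comm]
        exact Finset.sum_congr rfl fun w _ => Finset.sum_comm
    _ = ∑ k ∈ range (n+1), ∑ w ∈ W Γ n, ∑ g ∈ F,
          (if walkAt g w k ∈ S ∧ ∀ j : Fin (n+1), k < (j : ℕ) → walkAt g w (j : ℕ) ∉ S
            then (1:ℕ) else 0) := Finset.sum_comm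
    _ = ∑ k ∈ range (n+1), ∑ w ∈ W Γ n, ∑ h ∈ S,
          (if ∀ j : Fin (n+1), k < (j : ℕ) →
            h * (((List.ofFn w).drop k).take ((j : ℕ) - k)).prod ∉ S then (1:ℕ) else 0) := by
        refine Finset.sum_congr rfl fun k hk => Finset.sum_congr rfl fun w hw => ?_
        have hk' : k ≤ n := Nat.lt_succ_iff.mp (Finset.mem_range.1 hk)
        exact sum_lastexit S F k w
          (fun h hh => hF h hh k hk' _ (prod_take_mem_pow Γ hw hk'))
    _ = ∑ k ∈ range (n+1), Γ.card ^ k * ∑ h ∈ S, avoidCount Γ S h (n - k) := by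
        refine Finset.sum_congr rfl fun k hk => ?_
        have hk' : k ≤ n := Nat.lt_succ_iff.mp (Finset.mem_range.1 hk)
        obtain ⟨m, rfl⟩ : ∃ m, n = k + m := ⟨n - k, (Nat.add_sub_cancel' hk').symm⟩
        rw [Finset.sum_comm, Finset.mul_sum]
        refine Finset.sum_congr rfl fun h hh => ?_
        rw [show k + m - k = m from by omega]
        rw [sum_drop Γ k m (fun l => if ∀ j : Fin (k+m+1), k < (j : ℕ) →
          h * ((l.take ((j : ℕ) - k)).prod) ∉ S then (1:ℕ) else 0)]
        congr 1
        rw [avoidCount, Finset.card_filter]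
        refine Finset.sum_congr rfl fun v hv => ?_
        refine if_congr ?_ rfl rfl
        constructor
        · intro H kk
          have h2 := H ⟨k + ((kk : ℕ) + 1), by omega⟩ (by simp)
          simp only at h2
          rw [show k + ((kk : ℕ) + 1) - k = (kk : ℕ) + 1 from by omega] at h2
          simpa [walkAt] using h2
        · intro H j hkj
          have hjm : (j : ℕ) - k - 1 < m := by
            have := j.isLt
            omega
          have h2 := H ⟨(j : ℕ) - k - 1, hjm⟩
          simp only [walkAt] at h2
          rwa [show (j : ℕ) - k - 1 + 1 = (j : ℕ) - k from by omega] at h2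

lemma avoidCount_succ_le (Γ S : Finset G) (g : G) (n : ℕ) :
    avoidCount Γ S g (n+1) ≤ Γ.card * avoidCount Γ S g n := by
  have h1 : avoidCount Γ S g (n+1)
      ≤ ∑ w ∈ W Γ (n+1),
        (if ∀ k : Fin n, g * ((((List.ofFn w).take n).take ((k : ℕ)+1)).prod) ∉ S
          then (1:ℕ) else 0) := by
    rw [avoidCount, Finset.card_filter]
    refine Finset.sum_le_sum fun w _ => ?_
    by_cases hP : ∀ k : Fin (n+1), walkAt g w ((k : ℕ) + 1) ∉ S
    · rw [if_pos hP, if_pos]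
      intro k
      have h2 := hP (Fin.castSucc k)
      have h3 : ((List.ofFn w).take n).take ((k : ℕ) + 1) = (List.ofFn w).take ((k : ℕ)+1) := by
        rw [List.take_take]
        congr 1
        omega
      rw [h3]
      simpa [walkAt] using h2
    · rw [if_neg hP]
      exact Nat.zero_le _
  have h2 := sum_take Γ n 1
    (fun l => if ∀ k : Fin n, g * ((l.take ((k : ℕ)+1)).prod) ∉ S then (1:ℕ) else 0)
  rw [pow_one] at h2
  rw [h2] at h1
  refine h1.trans ?_
  refine Nat.mul_le_mul_left _ ?_
  rw [avoidCount, Finset.card_filter]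
  refine le_of_eq (Finset.sum_congr rfl fun u _ => ?_)
  refine if_congr ?_ rfl rfl
  simp only [walkAt]

lemma escProbN_nonneg (Γ S : Finset G) (g : G) (m : ℕ) : 0 ≤ escProbN Γ S g m := by
  rw [escProbN_eq]
  positivity

lemma escProbN_antitone (Γ : Finset G) (hne : Γ.Nonempty) (S : Finset G) (g : G) :
    Antitone (escProbN Γ S g) := by
  have hc : (0:ℝ) < Γ.card := by exact_mod_cast Finset.card_pos.2 hne
  apply antitone_nat_of_succ_le
  intro n
  rw [escProbN_eq, escProbN_eq]
  have h : (avoidCount Γ S g (n+1) : ℝ) ≤ (Γ.card : ℝ) * avoidCount Γ S g n := by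
    exact_mod_cast avoidCount_succ_le Γ S g n
  have h2 := mul_le_mul_of_nonneg_left h
    (inv_nonneg.2 (le_of_lt (pow_pos hc (n+1))))
  have hrw : (((Γ.card : ℝ))^(n+1))⁻¹ * ((Γ.card : ℝ) * avoidCount Γ S g n)
      = (((Γ.card : ℝ))^n)⁻¹ * avoidCount Γ S g n := by
    field_simp
    ring
  rwa [hrw] at h2

lemma escProb_le (Γ S : Finset G) (g : G) (m : ℕ) :
    escProb Γ S g ≤ escProbN Γ S g m := by
  refine ciInf_le ⟨0, ?_⟩ m
  rintro x ⟨i, rfl⟩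
  exact escProbN_nonneg Γ S g i

lemma cap_le_capN (Γ S : Finset G) (m : ℕ) :
    cap Γ S ≤ ∑ h ∈ S, escProbN Γ S h m :=
  Finset.sum_le_sum fun h _ => escProb_le Γ S h m

open Filter Topology in
lemma capN_tendsto (Γ : Finset G) (hne : Γ.Nonempty) (S : Finset G) :
    Tendsto (fun m => ∑ h ∈ S, escProbN Γ S h m) atTop (nhds (cap Γ S)) := by
  rw [cap]
  refine tendsto_finset_sum _ fun h _ => ?_
  exact tendsto_atTop_ciInf (escProbN_antitone Γ hne S h)
    ⟨0, by rintro x ⟨i, rfl⟩; exact escProbN_nonneg Γ S h i⟩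

lemma capN_partial (Γ : Finset G) (hne : Γ.Nonempty) (A B : Finset G) (n : ℕ) :
    ∑ m ∈ range (n+1), ((∑ h ∈ A ∪ B, escProbN Γ (A ∪ B) h m)
        + ∑ h ∈ A ∩ B, escProbN Γ (A ∩ B) h m)
      ≤ ∑ m ∈ range (n+1), ((∑ h ∈ A, escProbN Γ A h m)
        + ∑ h ∈ B, escProbN Γ B h m) := by
  classical
  have hc : (0:ℝ) < Γ.card := by exact_mod_cast Finset.card_pos.2 hne
  set F := ((A ∪ B) ×ˢ ((range (n+1)).biUnion fun k => Γ ^ k)).image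
    (fun p : G × G => p.1 * p.2⁻¹) with hFdef
  have hF : ∀ (S : Finset G), S ⊆ A ∪ B → ∀ h ∈ S, ∀ k, k ≤ n → ∀ c ∈ Γ ^ k,
      h * c⁻¹ ∈ F := by
    intro S hS h hh k hk c hcmem
    refine Finset.mem_image.2 ⟨(h, c), ?_, rfl⟩
    exact Finset.mem_product.2 ⟨hS hh,
      Finset.mem_biUnion.2 ⟨k, Finset.mem_range.2 (by omega), hcmem⟩⟩
  have key : ∑ k ∈ range (n+1), Γ.card ^ k *
        ((∑ h ∈ A ∪ B, avoidCount Γ (A ∪ B) h (n-k))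
          + ∑ h ∈ A ∩ B, avoidCount Γ (A ∩ B) h (n-k))
      ≤ ∑ k ∈ range (n+1), Γ.card ^ k *
        ((∑ h ∈ A, avoidCount Γ A h (n-k)) + ∑ h ∈ B, avoidCount Γ B h (n-k)) := by
    have h1 := sum_hitC Γ (A ∪ B) F n (hF _ (subset_refl _))
    have h2 := sum_hitC Γ (A ∩ B) F n
      (hF _ (Finset.inter_subset_left.trans Finset.subset_union_left))
    have h3 := sum_hitC Γ A F n (hF _ Finset.subset_union_left)
    have h4 := sum_hitC Γ B F n (hF _ Finset.subset_union_right)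
    calc ∑ k ∈ range (n+1), Γ.card ^ k *
          ((∑ h ∈ A ∪ B, avoidCount Γ (A ∪ B) h (n-k))
            + ∑ h ∈ A ∩ B, avoidCount Γ (A ∩ B) h (n-k))
        = ∑ g ∈ F, (hitC Γ (A ∪ B) g n + hitC Γ (A ∩ B) g n) := by
          rw [Finset.sum_add_distrib]
          simp only [mul_add]
          rw [Finset.sum_add_distrib, ← h1, ← h2]
      _ ≤ ∑ g ∈ F, (hitC Γ A g n + hitC Γ B g n) :=
          Finset.sum_le_sum fun g _ => hitC_card_ineq Γ A B g n
      _ = ∑ k ∈ range (n+1), Γ.card ^ k *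
          ((∑ h ∈ A, avoidCount Γ A h (n-k)) + ∑ h ∈ B, avoidCount Γ B h (n-k)) := by
          rw [Finset.sum_add_distrib, h3, h4]
          simp only [mul_add]
          rw [Finset.sum_add_distrib]
  have conv : ∀ S : Finset G, ∑ m ∈ range (n+1), ∑ h ∈ S, escProbN Γ S h m
      = ((Γ.card : ℝ)^n)⁻¹ * ∑ k ∈ range (n+1), (Γ.card : ℝ)^k
          * ∑ h ∈ S, (avoidCount Γ S h (n-k) : ℝ) := by
    intro S
    rw [Finset.mul_sum, ← Finset.sum_range_reflect]
    refine Finset.sum_congr rfl fun m hm => ?_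
    have hm' : m ≤ n := by
      have := Finset.mem_range.1 hm
      omega
    rw [show n + 1 - 1 - m = n - m from by omega]
    have hpow : ((Γ.card : ℝ)^n)⁻¹ * (Γ.card : ℝ)^m = ((Γ.card : ℝ)^(n-m))⁻¹ := by
      rw [show n = (n - m) + m from by omega, pow_add]
      field_simp
      simp [Nat.add_sub_cancel]
    rw [← mul_assoc, hpow, Finset.mul_sum]
    exact Finset.sum_congr rfl fun h _ => escProbN_eq Γ S h (n-m)
  have keyR : ∑ k ∈ range (n+1), (Γ.card : ℝ)^k *
        ((∑ h ∈ A ∪ B, (avoidCount Γ (A ∪ B) h (n-k) : ℝ))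
          + ∑ h ∈ A ∩ B, (avoidCount Γ (A ∩ B) h (n-k) : ℝ))
      ≤ ∑ k ∈ range (n+1), (Γ.card : ℝ)^k *
        ((∑ h ∈ A, (avoidCount Γ A h (n-k) : ℝ))
          + ∑ h ∈ B, (avoidCount Γ B h (n-k) : ℝ)) := by
    have := (Nat.cast_le (α := ℝ)).2 key
    push_cast at this
    exact this
  have hinv : (0:ℝ) ≤ ((Γ.card : ℝ)^n)⁻¹ := by positivity
  calc ∑ m ∈ range (n+1), ((∑ h ∈ A ∪ B, escProbN Γ (A ∪ B) h m)
        + ∑ h ∈ A ∩ B, escProbN Γ (A ∩ B) h m)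
      = ((Γ.card : ℝ)^n)⁻¹ * ∑ k ∈ range (n+1), (Γ.card : ℝ)^k *
        ((∑ h ∈ A ∪ B, (avoidCount Γ (A ∪ B) h (n-k) : ℝ))
          + ∑ h ∈ A ∩ B, (avoidCount Γ (A ∩ B) h (n-k) : ℝ)) := by
        rw [Finset.sum_add_distrib, conv (A ∪ B), conv (A ∩ B), ← mul_add,
          ← Finset.sum_add_distrib]
        congr 1
        refine Finset.sum_congr rfl fun k _ => ?_
        rw [mul_add]
    _ ≤ ((Γ.card : ℝ)^n)⁻¹ * ∑ k ∈ range (n+1), (Γ.card : ℝ)^k *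
        ((∑ h ∈ A, (avoidCount Γ A h (n-k) : ℝ))
          + ∑ h ∈ B, (avoidCount Γ B h (n-k) : ℝ)) :=
        mul_le_mul_of_nonneg_left keyR hinv
    _ = ∑ m ∈ range (n+1), ((∑ h ∈ A, escProbN Γ A h m)
        + ∑ h ∈ B, escProbN Γ B h m) := by
        rw [Finset.sum_add_distrib, conv A, conv B, ← mul_add, ← Finset.sum_add_distrib]
        congr 1
        refine Finset.sum_congr rfl fun k _ => ?_
        rw [mul_add]

end CapProof

theorem cap_union_le {G : Type*} [Group G] [DecidableEq G] (Γ : Finset G)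
    (hne : Γ.Nonempty) (hsym : ∀ γ ∈ Γ, γ⁻¹ ∈ Γ)
    (hgen : Subgroup.closure (Γ : Set G) = ⊤)
    (htrans : Summable fun n => transP Γ n (1 : G) 1)
    (A B : Finset G) :
    cap Γ (A ∪ B) ≤ cap Γ A + cap Γ B - cap Γ (A ∩ B) := by
  classical
  have hu : Filter.Tendsto
      (fun m => (∑ h ∈ A, escProbN Γ A h m) + ∑ h ∈ B, escProbN Γ B h m)
      Filter.atTop (nhds (cap Γ A + cap Γ B)) :=
    (CapProof.capN_tendsto Γ hne A).add (CapProof.capN_tendsto Γ hne B)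
  have hces := hu.cesaro
  have hces' : Filter.Tendsto
      (fun n : ℕ => (((n+1 : ℕ) : ℝ))⁻¹ * ∑ i ∈ range (n+1),
        ((∑ h ∈ A, escProbN Γ A h i) + ∑ h ∈ B, escProbN Γ B h i))
      Filter.atTop (nhds (cap Γ A + cap Γ B)) :=
    hces.comp (Filter.tendsto_add_atTop_nat 1)
  have hlow : ∀ n : ℕ, cap Γ (A ∪ B) + cap Γ (A ∩ B)
      ≤ (((n+1 : ℕ) : ℝ))⁻¹ * ∑ i ∈ range (n+1),
        ((∑ h ∈ A, escProbN Γ A h i) + ∑ h ∈ B, escProbN Γ B h i) := by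
    intro n
    have h1 : ((n+1 : ℕ) : ℝ) * (cap Γ (A ∪ B) + cap Γ (A ∩ B))
        ≤ ∑ i ∈ range (n+1),
          ((∑ h ∈ A, escProbN Γ A h i) + ∑ h ∈ B, escProbN Γ B h i) := by
      calc ((n+1 : ℕ) : ℝ) * (cap Γ (A ∪ B) + cap Γ (A ∩ B))
          = ∑ _m ∈ range (n+1), (cap Γ (A ∪ B) + cap Γ (A ∩ B)) := by
            rw [Finset.sum_const, Finset.card_range, nsmul_eq_mul]
        _ ≤ ∑ m ∈ range (n+1), ((∑ h ∈ A ∪ B, escProbN Γ (A ∪ B) h m)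
            + ∑ h ∈ A ∩ B, escProbN Γ (A ∩ B) h m) :=
            Finset.sum_le_sum fun m _ => add_le_add
              (CapProof.cap_le_capN Γ (A ∪ B) m) (CapProof.cap_le_capN Γ (A ∩ B) m)
        _ ≤ _ := CapProof.capN_partial Γ hne A B n
    have hn : (0:ℝ) < ((n+1 : ℕ) : ℝ) := by positivity
    have h2 := mul_le_mul_of_nonneg_left h1 (le_of_lt (inv_pos.2 hn))
    rwa [← mul_assoc, inv_mul_cancel₀ hn.ne', one_mul] at h2
  have hfin : cap Γ (A ∪ B) + cap Γ (A ∩ B) ≤ cap Γ A + cap Γ B :=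
    ge_of_tendsto' hces' hlow
  linarith
end

section
/- Let A and B be finite subsets of a group G carrying a transient symmetric random walk with Green function 𝒢(g₁, g₂) = Σ_{n≥0} pₙ(g₁, g₂). Then Cap(A ∪ B) ≥ Cap(A) + Cap(B) − 2 𝒢(A, B), where 𝒢(A, B) = Σ_{a∈A} Σ_{b∈B} 𝒢(a, b). -/
open Finset

/-- The Green function of the walk. -/
noncomputable def green {G : Type*} [Group G] [DecidableEq G] (Γ : Finset G)
    (g₁ g₂ : G) : ℝ :=
  ∑' n : ℕ, transP Γ n g₁ g₂

set_option linter.unusedSectionVars false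

/-- lift a word with letters in `Γ` to a word in `G`. -/
def liftw {G : Type*} (Γ : Finset G) {n : ℕ} (w : Fin n → {x // x ∈ Γ}) : Fin n → G :=
  fun i => ↑(w i)

section Aux
variable {G : Type*} [Group G] [DecidableEq G] {Γ : Finset G}

lemma transP_nonneg (n : ℕ) (g₁ g₂ : G) : 0 ≤ transP Γ n g₁ g₂ := by
  induction n generalizing g₁ with
  | zero => simp only [transP]; positivity
  | succ n ih =>
    simp only [transP]
    exact mul_nonneg (by positivity) (Finset.sum_nonneg fun γ _ => ih _)

lemma transP_succ_right (hsym : ∀ γ ∈ Γ, γ⁻¹ ∈ Γ) (n : ℕ) (g₁ g₂ : G) :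
    transP Γ (n+1) g₁ g₂ = (Γ.card : ℝ)⁻¹ * ∑ γ ∈ Γ, transP Γ n g₁ (g₂ * γ) := by
  induction n generalizing g₁ g₂ with
  | zero =>
    simp only [transP]
    congr 1
    have h1 : ∀ γ : G, (g₁ * γ = g₂) = (γ = g₁⁻¹ * g₂) := fun γ =>
      propext eq_inv_mul_iff_mul_eq.symm
    have h2 : ∀ γ : G, (g₁ = g₂ * γ) = (γ = g₂⁻¹ * g₁) := fun γ =>
      propext (eq_comm.trans eq_inv_mul_iff_mul_eq.symm)
    simp only [h1, h2, Finset.sum_ite_eq' Γ]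
    have : g₁⁻¹ * g₂ ∈ Γ ↔ g₂⁻¹ * g₁ ∈ Γ := by
      constructor
      · intro h; simpa using hsym _ h
      · intro h; simpa using hsym _ h
    exact if_congr this rfl rfl
  | succ n ih =>
    have hR : ∀ γ : G, transP Γ (n+1) g₁ (g₂*γ) = (Γ.card:ℝ)⁻¹ * ∑ δ ∈ Γ, transP Γ n (g₁*δ) (g₂*γ) := fun γ => rfl
    have hL : transP Γ (n+2) g₁ g₂ = (Γ.card:ℝ)⁻¹ * ∑ δ ∈ Γ, transP Γ (n+1) (g₁*δ) g₂ := rfl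
    rw [hL]
    simp only [fun d : G => ih (g₁ * d) g₂, hR]
    simp only [← Finset.mul_sum]
    rw [Finset.sum_comm]

lemma transP_symm (hsym : ∀ γ ∈ Γ, γ⁻¹ ∈ Γ) (n : ℕ) (g₁ g₂ : G) :
    transP Γ n g₁ g₂ = transP Γ n g₂ g₁ := by
  induction n generalizing g₁ g₂ with
  | zero => simp only [transP]; simp [eq_comm]
  | succ n ih =>
    show (Γ.card : ℝ)⁻¹ * ∑ γ ∈ Γ, transP Γ n (g₁ * γ) g₂ = _
    rw [transP_succ_right hsym]
    congr 1
    exact Finset.sum_congr rfl fun γ _ => ih _ _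

lemma transP_mul_left (n : ℕ) (x g₁ g₂ : G) :
    transP Γ n (x * g₁) (x * g₂) = transP Γ n g₁ g₂ := by
  induction n generalizing g₁ with
  | zero => simp [transP]
  | succ n ih =>
    simp only [transP]
    congr 1
    exact Finset.sum_congr rfl fun γ _ => by rw [mul_assoc]; exact ih _

lemma transP_diag (n : ℕ) (g : G) : transP Γ n g g = transP Γ n 1 1 := by
  simpa using transP_mul_left (Γ := Γ) n g 1 1

lemma transP_mul_le (n m : ℕ) (x y z : G) :
    transP Γ n x y * transP Γ m y z ≤ transP Γ (n+m) x z := by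
  induction n generalizing x with
  | zero =>
    simp only [transP, Nat.zero_add]
    by_cases h : x = y
    · simp [h]
    · simp [h, transP_nonneg]
  | succ n ih =>
    have hnm : n + 1 + m = (n + m) + 1 := by omega
    rw [hnm]
    show _ ≤ (Γ.card : ℝ)⁻¹ * ∑ γ ∈ Γ, transP Γ (n+m) (x*γ) z
    have h1 : transP Γ (n+1) x y * transP Γ m y z
        = (Γ.card : ℝ)⁻¹ * ∑ γ ∈ Γ, (transP Γ n (x*γ) y * transP Γ m y z) := by
      show ((Γ.card : ℝ)⁻¹ * ∑ γ ∈ Γ, transP Γ n (x*γ) y) * transP Γ m y z = _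
      rw [mul_assoc, Finset.sum_mul]
    rw [h1]
    apply mul_le_mul_of_nonneg_left _ (by positivity)
    exact Finset.sum_le_sum fun γ _ => ih _

lemma exists_transP_pos (hne : Γ.Nonempty) (hsym : ∀ γ ∈ Γ, γ⁻¹ ∈ Γ)
    (hgen : Subgroup.closure (Γ : Set G) = ⊤) (x : G) :
    ∃ m, 0 < transP Γ m 1 x := by
  have hcard : (0:ℝ) < Γ.card := by exact_mod_cast Finset.card_pos.2 hne
  have hx : x ∈ Subgroup.closure (Γ : Set G) := by rw [hgen]; trivial
  induction hx using Subgroup.closure_induction with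
  | mem γ hγ =>
    refine ⟨1, ?_⟩
    have h : transP Γ 1 1 γ = (Γ.card : ℝ)⁻¹ * ∑ δ ∈ Γ, (if δ = γ then (1:ℝ) else 0) := by
      show (Γ.card : ℝ)⁻¹ * ∑ δ ∈ Γ, transP Γ 0 (1*δ) γ = _
      congr 1
      refine Finset.sum_congr rfl fun δ _ => ?_
      simp [transP]
    have hγ' : γ ∈ Γ := hγ
    rw [h, Finset.sum_ite_eq' Γ γ, if_pos hγ']
    positivity
  | one => exact ⟨0, by simp [transP]⟩
  | mul a b _ _ ha hb =>
    obtain ⟨m, hm⟩ := ha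
    obtain ⟨m', hm'⟩ := hb
    refine ⟨m + m', lt_of_lt_of_le ?_ (transP_mul_le m m' 1 a (a*b))⟩
    have h : transP Γ m' a (a*b) = transP Γ m' 1 b := by
      simpa using transP_mul_left m' a 1 b
    rw [h]
    exact mul_pos hm hm'
  | inv a _ ha =>
    obtain ⟨m, hm⟩ := ha
    refine ⟨m, ?_⟩
    have h1 : transP Γ m 1 a⁻¹ = transP Γ m a⁻¹ 1 := transP_symm hsym m 1 a⁻¹
    have h2 : transP Γ m a⁻¹ 1 = transP Γ m 1 a := by
      have := transP_mul_left (Γ := Γ) m a⁻¹ 1 a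
      simpa using this
    rw [h1, h2]; exact hm

lemma transP_summable (hne : Γ.Nonempty) (hsym : ∀ γ ∈ Γ, γ⁻¹ ∈ Γ)
    (hgen : Subgroup.closure (Γ : Set G) = ⊤)
    (htrans : Summable fun n => transP Γ n (1 : G) 1) (g₁ g₂ : G) :
    Summable fun n => transP Γ n g₁ g₂ := by
  obtain ⟨m, hm⟩ := exists_transP_pos hne hsym hgen (g₂⁻¹ * g₁)
  have hc : transP Γ m 1 (g₂⁻¹ * g₁) = transP Γ m g₂ g₁ := by
    have := transP_mul_left (Γ := Γ) m g₂⁻¹ g₂ g₁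
    simpa using this
  rw [hc] at hm
  refine Summable.of_nonneg_of_le (fun n => transP_nonneg (Γ := Γ) n g₁ g₂) (fun n => ?_)
    (((summable_nat_add_iff m).2 htrans).div_const (transP Γ m g₂ g₁))
  rw [le_div_iff₀ hm]
  calc transP Γ n g₁ g₂ * transP Γ m g₂ g₁ ≤ transP Γ (n+m) g₁ g₁ := transP_mul_le n m g₁ g₂ g₁
    _ = transP Γ (n+m) 1 1 := transP_diag _ _

lemma green_nonneg (g₁ g₂ : G) : 0 ≤ green Γ g₁ g₂ :=
  tsum_nonneg fun n => transP_nonneg n g₁ g₂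

lemma green_symm (hsym : ∀ γ ∈ Γ, γ⁻¹ ∈ Γ) (g₁ g₂ : G) :
    green Γ g₁ g₂ = green Γ g₂ g₁ :=
  tsum_congr fun n => transP_symm hsym n g₁ g₂

lemma one_le_green_self (g : G) (hsum : Summable fun n => transP Γ n g g) :
    1 ≤ green Γ g g := by
  have h := Summable.le_tsum hsum 0 (fun j _ => transP_nonneg (Γ := Γ) j g g)
  simpa [transP, green] using h

lemma sum_transP_le_green (g b : G) (hsum : Summable fun n => transP Γ n g b) (n : ℕ) :
    ∑ k ∈ Finset.range n, transP Γ (k+1) g b ≤ green Γ g b := by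
  have h1 : ∑ k ∈ Finset.range n, transP Γ (k+1) g b ≤ ∑ k ∈ Finset.range (n+1), transP Γ k g b := by
    rw [Finset.sum_range_succ']
    have := transP_nonneg (Γ := Γ) 0 g b
    linarith
  exact h1.trans (Summable.sum_le_tsum _ (fun i _ => transP_nonneg i g b) hsum)

lemma walkAt_zero (g : G) {n : ℕ} (w : Fin n → G) : walkAt g w 0 = g := by
  simp [walkAt]

lemma walkAt_cons (g γ : G) {n : ℕ} (w : Fin n → G) (k : ℕ) :
    walkAt g (Fin.cons γ w) (k+1) = walkAt (g*γ) w k := by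
  unfold walkAt
  rw [List.ofFn_succ]
  simp only [Fin.cons_zero, Fin.cons_succ]
  rw [List.take_succ_cons, List.prod_cons, ← mul_assoc]

lemma liftw_cons (γ : {x // x ∈ Γ}) {n : ℕ} (w : Fin n → {x // x ∈ Γ}) :
    liftw Γ (Fin.cons γ w) = Fin.cons (γ : G) (liftw Γ w) := by
  funext i
  refine Fin.cases ?_ (fun j => ?_) i <;> simp [liftw]

/-- Convert a sum over `piFinset` to a sum over all functions into the subtype. -/
lemma sum_piFinset_eq {n : ℕ} (f : (Fin n → G) → ℝ) :
    ∑ w ∈ Fintype.piFinset (fun _ : Fin n => Γ), f w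
      = ∑ w : Fin n → {x // x ∈ Γ}, f (liftw Γ w) := by
  refine (Finset.sum_bij' (fun w _ => liftw Γ w)
    (fun w hw => fun i => ⟨w i, Fintype.mem_piFinset.1 hw i⟩) ?_ ?_ ?_ ?_ ?_).symm
  · intro w _; exact Fintype.mem_piFinset.2 fun i => (w i).2
  · intro w hw; exact Finset.mem_univ _
  · intro w _; rfl
  · intro w hw; rfl
  · intro w _; rfl

lemma sum_univ_cons {n : ℕ} (f : (Fin (n+1) → {x // x ∈ Γ}) → ℝ) :
    ∑ w : Fin (n+1) → {x // x ∈ Γ}, f w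
      = ∑ γ : {x // x ∈ Γ}, ∑ w : Fin n → {x // x ∈ Γ}, f (Fin.cons γ w) := by
  calc ∑ w : Fin (n+1) → {x // x ∈ Γ}, f w
      = ∑ p : {x // x ∈ Γ} × (Fin n → {x // x ∈ Γ}), f (Fin.cons p.1 p.2) :=
        (Fintype.sum_equiv (Fin.consEquiv fun _ => {x // x ∈ Γ}) _ _ (fun p => rfl)).symm
    _ = _ := by rw [Fintype.sum_prod_type]

lemma sum_coe_sort_eq (f : G → ℝ) :
    ∑ γ ∈ Γ, f γ = ∑ γ : {x // x ∈ Γ}, f γ :=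
  (Finset.sum_coe_sort Γ f).symm

lemma transP_eq_count (n : ℕ) (g₁ g₂ : G) :
    transP Γ n g₁ g₂ = ((Γ.card : ℝ)^n)⁻¹ *
      ∑ w : Fin n → {x // x ∈ Γ}, (if walkAt g₁ (liftw Γ w) n = g₂ then (1:ℝ) else 0) := by
  induction n generalizing g₁ with
  | zero =>
    simp [transP, walkAt]
  | succ n ih =>
    show (Γ.card : ℝ)⁻¹ * ∑ γ ∈ Γ, transP Γ n (g₁ * γ) g₂ = _
    rw [sum_coe_sort_eq (fun γ => transP Γ n (g₁ * γ) g₂)]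
    rw [sum_univ_cons (Γ := Γ)]
    have h1 : ∀ γ : {x // x ∈ Γ}, ∀ w : Fin n → {x // x ∈ Γ},
        (if walkAt g₁ (liftw Γ (Fin.cons γ w)) (n+1) = g₂ then (1:ℝ) else 0)
        = (if walkAt (g₁ * γ) (liftw Γ w) n = g₂ then (1:ℝ) else 0) := by
      intro γ w
      rw [liftw_cons, walkAt_cons]
    simp only [h1]
    simp only [fun γ : {x // x ∈ Γ} => ih (g₁ * (γ : G))]
    rw [← Finset.mul_sum, pow_succ, mul_inv]
    ring

lemma sum_walkAt_restrict (F : G → ℝ) :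
    ∀ (k n : ℕ), k ≤ n → ∀ g : G,
    ∑ w : Fin n → {x // x ∈ Γ}, F (walkAt g (liftw Γ w) k)
      = (Γ.card:ℝ)^(n-k) * ∑ w : Fin k → {x // x ∈ Γ}, F (walkAt g (liftw Γ w) k) := by
  intro k
  induction k with
  | zero =>
    intro n _ g
    simp only [walkAt_zero]
    rw [Finset.sum_const, Finset.sum_const]
    simp [Finset.card_univ, Fintype.card_fun, Fintype.card_coe, nsmul_eq_mul, mul_assoc]
  | succ k ih =>
    intro n hkn g
    obtain ⟨m, rfl⟩ : ∃ m, n = m + 1 := ⟨n - 1, by omega⟩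
    have hkm : k ≤ m := by omega
    rw [sum_univ_cons (Γ := Γ) (fun w => F (walkAt g (liftw Γ w) (k+1))),
        sum_univ_cons (Γ := Γ) (fun w => F (walkAt g (liftw Γ w) (k+1)))]
    have h1 : ∀ (j : ℕ) (γ : {x // x ∈ Γ}) (w : Fin j → {x // x ∈ Γ}),
        F (walkAt g (liftw Γ (Fin.cons γ w)) (k+1)) = F (walkAt (g * γ) (liftw Γ w) k) := by
      intro j γ w; rw [liftw_cons, walkAt_cons]
    simp only [h1]
    have h2 : ∀ γ : {x // x ∈ Γ},
        ∑ w : Fin m → {x // x ∈ Γ}, F (walkAt (g * γ) (liftw Γ w) k)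
        = (Γ.card:ℝ)^(m-k) * ∑ w : Fin k → {x // x ∈ Γ}, F (walkAt (g * γ) (liftw Γ w) k) :=
      fun γ => ih m hkm (g * γ)
    simp only [h2]
    rw [Nat.succ_sub_succ, Finset.mul_sum]

lemma escProbN_eq (A : Finset G) (g : G) (n : ℕ) :
    escProbN Γ A g n = ((Γ.card:ℝ)^n)⁻¹ *
      ∑ w : Fin n → {x // x ∈ Γ},
        (if ∀ k : Fin n, walkAt g (liftw Γ w) (k+1) ∉ A then (1:ℝ) else 0) := by
  unfold escProbN
  congr 1
  rw [← sum_piFinset_eq (f := fun w => if ∀ k : Fin n, walkAt g w (k+1) ∉ A then (1:ℝ) else 0)]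
  rw [Finset.card_filter]
  push_cast
  rfl

lemma escProbN_nonneg {A : Finset G} {g : G} {n : ℕ} : 0 ≤ escProbN Γ A g n := by
  unfold escProbN
  positivity

lemma escProbN_zero (A : Finset G) (g : G) : escProbN Γ A g 0 = 1 := by
  unfold escProbN
  rw [Finset.filter_true_of_mem (fun w _ => fun k => k.elim0)]
  rw [Fintype.card_piFinset]
  simp

lemma escProb_le_escProbN (A : Finset G) (g : G) (n : ℕ) :
    escProb Γ A g ≤ escProbN Γ A g n := by
  apply ciInf_le
  refine ⟨0, ?_⟩
  rintro x ⟨m, rfl⟩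
  exact escProbN_nonneg

lemma escProb_nonneg (A : Finset G) (g : G) : 0 ≤ escProb Γ A g :=
  le_ciInf fun n => escProbN_nonneg

lemma escProb_le_one (A : Finset G) (g : G) : escProb Γ A g ≤ 1 :=
  (escProb_le_escProbN A g 0).trans_eq (escProbN_zero A g)

lemma escProbN_union_le (hne : Γ.Nonempty) (A B : Finset G) (g : G) (n : ℕ) :
    escProbN Γ A g n ≤ escProbN Γ (A ∪ B) g n
      + ∑ k ∈ Finset.range n, ∑ b ∈ B, transP Γ (k+1) g b := by
  have hcard : (0:ℝ) < Γ.card := by exact_mod_cast Finset.card_pos.2 hne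
  rw [escProbN_eq, escProbN_eq]
  -- the error (hitting) term, expressed as a sum over words
  have key : ((Γ.card:ℝ)^n)⁻¹ * ∑ w : Fin n → {x // x ∈ Γ},
          ∑ k : Fin n, (if walkAt g (liftw Γ w) ((k:ℕ)+1) ∈ B then (1:ℝ) else 0)
      = ∑ k ∈ Finset.range n, ∑ b ∈ B, transP Γ (k+1) g b := by
    rw [← Fin.sum_univ_eq_sum_range (fun k => ∑ b ∈ B, transP Γ (k+1) g b)]
    rw [Finset.sum_comm, Finset.mul_sum]
    refine Finset.sum_congr rfl fun k _ => ?_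
    have hk1 : (k:ℕ)+1 ≤ n := k.isLt
    rw [sum_walkAt_restrict (Γ := Γ) (fun x => if x ∈ B then (1:ℝ) else 0) ((k:ℕ)+1) n hk1 g]
    have hsplit : ∀ w : Fin ((k:ℕ)+1) → {x // x ∈ Γ},
        (if walkAt g (liftw Γ w) ((k:ℕ)+1) ∈ B then (1:ℝ) else 0)
        = ∑ b ∈ B, (if walkAt g (liftw Γ w) ((k:ℕ)+1) = b then (1:ℝ) else 0) := fun w =>
      (Finset.sum_ite_eq B (walkAt g (liftw Γ w) ((k:ℕ)+1)) (fun _ => (1:ℝ))).symm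
    simp only [hsplit]
    rw [Finset.sum_comm]
    have hcount : ∀ b : G,
        ∑ w : Fin ((k:ℕ)+1) → {x // x ∈ Γ},
          (if walkAt g (liftw Γ w) ((k:ℕ)+1) = b then (1:ℝ) else 0)
        = (Γ.card:ℝ)^((k:ℕ)+1) * transP Γ ((k:ℕ)+1) g b := by
      intro b
      rw [transP_eq_count ((k:ℕ)+1) g b]
      field_simp
    simp only [hcount]
    rw [Finset.mul_sum, Finset.mul_sum]
    refine Finset.sum_congr rfl fun b _ => ?_
    have hpow : (Γ.card:ℝ)^(n-((k:ℕ)+1)) * (Γ.card:ℝ)^((k:ℕ)+1) = (Γ.card:ℝ)^n := by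
      rw [← pow_add]
      congr 1
      omega
    have hc0 : ((Γ.card:ℝ))^n ≠ 0 := by positivity
    field_simp
    rw [← hpow]
  rw [← key, ← mul_add, ← Finset.sum_add_distrib]
  apply mul_le_mul_of_nonneg_left _ (by positivity)
  refine Finset.sum_le_sum fun w _ => ?_
  by_cases hA : ∀ k : Fin n, walkAt g (liftw Γ w) ((k:ℕ)+1) ∉ A
  · by_cases hAB : ∀ k : Fin n, walkAt g (liftw Γ w) ((k:ℕ)+1) ∉ A ∪ B
    · have h0 : (0:ℝ) ≤ ∑ k : Fin n, (if walkAt g (liftw Γ w) ((k:ℕ)+1) ∈ B then (1:ℝ) else 0) :=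
        Finset.sum_nonneg fun k _ => by positivity
      rw [if_pos hA, if_pos hAB]
      linarith
    · push_neg at hAB
      obtain ⟨k, hk⟩ := hAB
      have hkB : walkAt g (liftw Γ w) ((k:ℕ)+1) ∈ B := by
        rcases Finset.mem_union.1 hk with h | h
        · exact absurd h (hA k)
        · exact h
      have h1 : (1:ℝ) ≤ ∑ k : Fin n, (if walkAt g (liftw Γ w) ((k:ℕ)+1) ∈ B then (1:ℝ) else 0) := by
        have := Finset.single_le_sum
          (f := fun k : Fin n => (if walkAt g (liftw Γ w) ((k:ℕ)+1) ∈ B then (1:ℝ) else 0))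
          (fun i _ => by positivity) (Finset.mem_univ k)
        simpa [hkB] using this
      have h2 : (0:ℝ) ≤ (if ∀ k : Fin n, walkAt g (liftw Γ w) ((k:ℕ)+1) ∉ A ∪ B then (1:ℝ) else 0) := by
        positivity
      rw [if_pos hA]
      linarith
  · have h0 : (0:ℝ) ≤ (if ∀ k : Fin n, walkAt g (liftw Γ w) ((k:ℕ)+1) ∉ A ∪ B then (1:ℝ) else 0)
        + ∑ k : Fin n, (if walkAt g (liftw Γ w) ((k:ℕ)+1) ∈ B then (1:ℝ) else 0) := by
      have := Finset.sum_nonneg (s := (Finset.univ : Finset (Fin n)))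
        (f := fun k : Fin n => (if walkAt g (liftw Γ w) ((k:ℕ)+1) ∈ B then (1:ℝ) else 0))
        (fun k _ => by positivity)
      positivity
    rw [if_neg hA]
    linarith

lemma escProb_sub_le (hne : Γ.Nonempty) (hsym : ∀ γ ∈ Γ, γ⁻¹ ∈ Γ)
    (hgen : Subgroup.closure (Γ : Set G) = ⊤)
    (htrans : Summable fun n => transP Γ n (1 : G) 1)
    (A B : Finset G) (g : G) :
    escProb Γ A g - ∑ b ∈ B, green Γ g b ≤ escProb Γ (A ∪ B) g := by
  apply le_ciInf
  intro n
  have h1 := escProb_le_escProbN (Γ := Γ) A g n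
  have h2 := escProbN_union_le hne A B g n
  have h3 : ∑ k ∈ Finset.range n, ∑ b ∈ B, transP Γ (k+1) g b ≤ ∑ b ∈ B, green Γ g b := by
    rw [Finset.sum_comm]
    exact Finset.sum_le_sum fun b _ =>
      sum_transP_le_green g b (transP_summable hne hsym hgen htrans g b) n
  linarith

end Aux

theorem cap_union_ge {G : Type*} [Group G] [DecidableEq G] (Γ : Finset G)
    (hne : Γ.Nonempty) (hsym : ∀ γ ∈ Γ, γ⁻¹ ∈ Γ)
    (hgen : Subgroup.closure (Γ : Set G) = ⊤)
    (htrans : Summable fun n => transP Γ n (1 : G) 1)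
    (A B : Finset G) :
    cap Γ A + cap Γ B - 2 * ∑ a ∈ A, ∑ b ∈ B, green Γ a b ≤ cap Γ (A ∪ B) := by
  have hsummable : ∀ g₁ g₂ : G, Summable fun n => transP Γ n g₁ g₂ :=
    transP_summable hne hsym hgen htrans
  -- split `A ∪ B` into `A` and `B \ A`
  have hsplit : cap Γ (A ∪ B) = (∑ g ∈ A, escProb Γ (A ∪ B) g)
      + ∑ g ∈ B \ A, escProb Γ (A ∪ B) g := by
    unfold cap
    rw [← Finset.sum_union Finset.disjoint_sdiff, Finset.union_sdiff_self_eq_union]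
  -- bound on A
  have hA : ∑ g ∈ A, escProb Γ A g - ∑ a ∈ A, ∑ b ∈ B, green Γ a b
      ≤ ∑ g ∈ A, escProb Γ (A ∪ B) g := by
    rw [← Finset.sum_sub_distrib]
    exact Finset.sum_le_sum fun g _ => escProb_sub_le hne hsym hgen htrans A B g
  -- bound on B \ A
  have hBA : ∑ g ∈ B \ A, escProb Γ B g - ∑ g ∈ B \ A, ∑ a ∈ A, green Γ a g
      ≤ ∑ g ∈ B \ A, escProb Γ (A ∪ B) g := by
    rw [← Finset.sum_sub_distrib]
    refine Finset.sum_le_sum fun g _ => ?_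
    have h := escProb_sub_le hne hsym hgen htrans B A g
    rw [Finset.union_comm] at h
    have hg : ∑ a ∈ A, green Γ g a = ∑ a ∈ A, green Γ a g :=
      Finset.sum_congr rfl fun a _ => green_symm hsym g a
    linarith
  -- the part of cap B sitting inside A
  have hint : ∑ g ∈ B ∩ A, escProb Γ B g ≤ ∑ g ∈ B ∩ A, ∑ a ∈ A, green Γ a g := by
    refine Finset.sum_le_sum fun g hg => ?_
    have hgA : g ∈ A := (Finset.mem_inter.1 hg).2
    calc escProb Γ B g ≤ 1 := escProb_le_one B g
      _ ≤ green Γ g g := one_le_green_self g (hsummable g g)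
      _ ≤ ∑ a ∈ A, green Γ a g :=
        Finset.single_le_sum (f := fun a => green Γ a g)
          (fun a _ => green_nonneg a g) hgA
  have hcapB : cap Γ B = (∑ g ∈ B \ A, escProb Γ B g) + ∑ g ∈ B ∩ A, escProb Γ B g := by
    unfold cap
    rw [← Finset.sum_union (Finset.disjoint_sdiff_inter B A), Finset.sdiff_union_inter]
  have hgreensplit : (∑ g ∈ B \ A, ∑ a ∈ A, green Γ a g) + ∑ g ∈ B ∩ A, ∑ a ∈ A, green Γ a g
      = ∑ a ∈ A, ∑ b ∈ B, green Γ a b := by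
    rw [← Finset.sum_union (Finset.disjoint_sdiff_inter B A), Finset.sdiff_union_inter]
    rw [Finset.sum_comm]
  have hcapA : cap Γ A = ∑ g ∈ A, escProb Γ A g := rfl
  linarith
end

section
/- Let (aₙ) be a sequence of nonnegative reals satisfying the approximate subadditivity aₙ₊ₘ ≤ aₙ + aₘ + φ(n+m) for all n, m ≥ 1, where φ(n)/n² is summable and φ is nondecreasing (de Bruijn–Erdős condition Σ φ(n)/n² < ∞). Then aₙ/n converges to a finite limit as n → ∞. -/
open Filter Finset

/-- Balanced-tree doubling lemma: combining `q` blocks of size `m`. -/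
private lemma lemA_aux (a φ T : ℕ → ℝ) (ha : ∀ n, 0 ≤ a n) (hφ0 : ∀ n, 0 ≤ φ n)
    (hsub : ∀ m n : ℕ, 1 ≤ m → 1 ≤ n → a (m + n) ≤ a m + a n + φ (m + n))
    (hTanti : ∀ i j : ℕ, i ≤ j → T j ≤ T i)
    (hchunk : ∀ n : ℕ, 1 ≤ n → ∀ i j : ℕ, i ≤ n → 2 * n ≤ j →
      φ n / (4 * n) ≤ T i - T j) :
    ∀ q m : ℕ, 1 ≤ m → 1 ≤ q →
      a (q * m) ≤ q * a m + 12 * ((q : ℝ) * m) * (T m - T (2 * q * m)) := by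
  intro q
  induction q using Nat.strong_induction_on with
  | _ q ih =>
    intro m hm hq
    rcases lt_or_ge q 2 with hqlt | hq2
    · -- q = 1
      have hq1 : q = 1 := by omega
      subst hq1
      have h1 : T (2 * 1 * m) ≤ T m := hTanti _ _ (by omega)
      have hm1 : (1 : ℝ) ≤ (m : ℝ) := by exact_mod_cast hm
      simp only [one_mul, Nat.cast_one]
      nlinarith [ha m]
    · -- q ≥ 2
      set q2 := q / 2 with hq2def
      set q1 := q - q / 2 with hq1def
      have hfacts : 1 ≤ q1 ∧ 1 ≤ q2 ∧ q1 < q ∧ q2 < q ∧ q1 + q2 = q ∧ 2 * q2 ≤ q ∧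
          q ≤ 3 * q2 ∧ q1 ≤ q := by omega
      obtain ⟨h1q1, h1q2, hq1lt, hq2lt, hq1q2, h2q2, h3q2, hq1le⟩ := hfacts
      have hqm1 : 1 ≤ q * m := Nat.one_le_iff_ne_zero.2 (by positivity)
      have hsplit : a (q * m) ≤ a (q1 * m) + a (q2 * m) + φ (q * m) := by
        have h := hsub (q1 * m) (q2 * m) (Nat.one_le_iff_ne_zero.2 (by positivity))
          (Nat.one_le_iff_ne_zero.2 (by positivity))
        have he : q1 * m + q2 * m = q * m := by rw [← add_mul, hq1q2]
        rwa [he] at h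
      have ih1 := ih q1 hq1lt m hm h1q1
      have ih2 := ih q2 hq2lt m hm h1q2
      have hMpos : (0 : ℝ) < (m : ℝ) := by exact_mod_cast hm
      have hQpos : (0 : ℝ) < (q : ℝ) := by positivity
      have hkey : φ (q * m) / (4 * ((q * m : ℕ) : ℝ)) ≤ T (2 * q2 * m) - T (2 * q * m) := by
        apply hchunk (q * m) hqm1
        · calc 2 * q2 * m = (2 * q2) * m := rfl
            _ ≤ q * m := Nat.mul_le_mul_right m h2q2
        · exact le_of_eq (mul_assoc 2 q m).symm
      have hD2 : (0 : ℝ) ≤ T (2 * q2 * m) - T (2 * q * m) := by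
        have := hTanti (2 * q2 * m) (2 * q * m)
          (by exact Nat.mul_le_mul_right m (by omega))
        linarith
      have hD1 : (0 : ℝ) ≤ T (2 * q1 * m) - T (2 * q * m) := by
        have := hTanti (2 * q1 * m) (2 * q * m)
          (by exact Nat.mul_le_mul_right m (by omega))
        linarith
      have hcastqm : ((q * m : ℕ) : ℝ) = (q : ℝ) * m := by push_cast; ring
      have key' : φ (q * m) ≤ 4 * ((q : ℝ) * m) * (T (2 * q2 * m) - T (2 * q * m)) := by
        rw [hcastqm] at hkey
        rw [div_le_iff₀ (by positivity)] at hkey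
        nlinarith [hkey]
      have hP1 : (0 : ℝ) ≤ (m : ℝ) * (q1 : ℝ) * (T (2 * q1 * m) - T (2 * q * m)) := by
        positivity
      have h3Q2 : (q : ℝ) ≤ 3 * (q2 : ℝ) := by exact_mod_cast h3q2
      have hP2 : (0 : ℝ) ≤ (m : ℝ) * (3 * (q2 : ℝ) - q) *
          (T (2 * q2 * m) - T (2 * q * m)) := by
        apply mul_nonneg (mul_nonneg hMpos.le (by linarith)) hD2
      have hφqm : φ (q * m) ≤ 12 * (m : ℝ) * ((q1 : ℝ) * (T (2 * q1 * m) - T (2 * q * m)))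
          + 12 * (m : ℝ) * ((q2 : ℝ) * (T (2 * q2 * m) - T (2 * q * m))) := by
        nlinarith [key', hP1, hP2]
      have hc : (q : ℝ) = (q1 : ℝ) + (q2 : ℝ) := by exact_mod_cast hq1q2.symm
      rw [hc]
      nlinarith [hsplit, ih1, ih2, hφqm]

/-- de Bruijn–Erdős extension of Fekete's subadditivity lemma. -/
theorem de_bruijn_erdos_subadditive (a : ℕ → ℝ) (ha : ∀ n, 0 ≤ a n)
    (φ : ℕ → ℝ) (hφ0 : ∀ n, 0 ≤ φ n) (hφmono : Monotone φ)
    (hφsum : Summable fun n : ℕ => φ n / (n : ℝ) ^ 2)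
    (hsub : ∀ m n : ℕ, 1 ≤ m → 1 ≤ n → a (m + n) ≤ a m + a n + φ (m + n)) :
    ∃ L : ℝ, Filter.Tendsto (fun n : ℕ => a n / n) Filter.atTop (nhds L) := by
  set g : ℕ → ℝ := fun k => φ k / (k : ℝ) ^ 2 with hg_def
  have hg : Summable g := hφsum
  have hg0 : ∀ k, 0 ≤ g k := fun k => div_nonneg (hφ0 k) (by positivity)
  set T : ℕ → ℝ := fun n => ∑' k, g (k + n) with hT_def
  have hT0 : ∀ n, 0 ≤ T n := fun n => tsum_nonneg (fun k => hg0 _)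
  have hTpartial : ∀ n : ℕ, T n = (∑' i, g i) - ∑ i ∈ Finset.range n, g i := by
    intro n
    have := Summable.sum_add_tsum_nat_add n hg
    simp only [hT_def]
    linarith
  have hTdiff : ∀ i j : ℕ, i ≤ j → T i - T j = ∑ k ∈ Finset.Ico i j, g k := by
    intro i j hij
    rw [hTpartial i, hTpartial j, Finset.sum_Ico_eq_sub g hij]
    ring
  have hTanti : ∀ i j : ℕ, i ≤ j → T j ≤ T i := by
    intro i j hij
    have h := hTdiff i j hij
    have : 0 ≤ ∑ k ∈ Finset.Ico i j, g k := Finset.sum_nonneg (fun k _ => hg0 k)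
    linarith
  have hTtendsto : Filter.Tendsto T Filter.atTop (nhds 0) := tendsto_sum_nat_add g
  -- chunk bound
  have hchunk : ∀ n : ℕ, 1 ≤ n → ∀ i j : ℕ, i ≤ n → 2 * n ≤ j →
      φ n / (4 * n) ≤ T i - T j := by
    intro n hn i j hi hj
    have hsub1 : Finset.Ico n (2 * n) ⊆ Finset.Ico i j := by
      apply Finset.Ico_subset_Ico hi hj
    have h1 : ∑ k ∈ Finset.Ico n (2 * n), g k ≤ ∑ k ∈ Finset.Ico i j, g k :=
      Finset.sum_le_sum_of_subset_of_nonneg hsub1 (fun k _ _ => hg0 k)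
    have h2 : (Finset.Ico n (2 * n)).card • (φ n / (2 * (n : ℝ)) ^ 2) ≤
        ∑ k ∈ Finset.Ico n (2 * n), g k := by
      apply Finset.card_nsmul_le_sum
      intro k hk
      simp only [Finset.mem_Ico] at hk
      have hk1 : (n : ℝ) ≤ (k : ℝ) := by exact_mod_cast hk.1
      have hk2 : (k : ℝ) < 2 * (n : ℝ) := by exact_mod_cast hk.2
      have hkpos : (0 : ℝ) < (k : ℝ) := by
        have : 1 ≤ k := le_trans hn hk.1
        exact_mod_cast this
      have hφk : φ n ≤ φ k := hφmono hk.1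
      simp only [hg_def]
      have hk2' : (k : ℝ) ^ 2 ≤ (2 * (n : ℝ)) ^ 2 := by nlinarith
      exact div_le_div₀ (hφ0 k) hφk (by positivity) hk2'
    have hcard : (Finset.Ico n (2 * n)).card = n := by
      rw [Nat.card_Ico]; omega
    rw [hcard, nsmul_eq_mul] at h2
    have hij : i ≤ j := by omega
    rw [hTdiff i j hij]
    have hnpos : (0 : ℝ) < (n : ℝ) := by exact_mod_cast hn
    have heq : φ n / (4 * (n : ℝ)) = (n : ℝ) * (φ n / (2 * (n : ℝ)) ^ 2) := by
      field_simp; ring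
    rw [heq]
    linarith
  -- upper bound from lemA
  have lemA := lemA_aux a φ T ha hφ0 hsub hTanti hchunk
  set A : ℕ → ℝ := fun m => ∑ r ∈ Finset.range m, a r with hA_def
  have hA0 : ∀ m, 0 ≤ A m := fun m => Finset.sum_nonneg (fun r _ => ha r)
  have step1 : ∀ m n : ℕ, 1 ≤ m → m ≤ n →
      a n / n ≤ a m / m + 12 * T m + (A m / n + φ n / n) := by
    intro m n hm hmn
    set q := n / m with hq_def
    set r := n % m with hr_def
    have hmod : m * q + r = n := Nat.div_add_mod n m
    have hq1 : 1 ≤ q := (Nat.one_le_div_iff (by omega)).2 hmn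
    have hrm : r < m := Nat.mod_lt _ (by omega)
    have hn1 : 1 ≤ n := le_trans hm hmn
    have hnpos : (0 : ℝ) < (n : ℝ) := by exact_mod_cast hn1
    have hmpos : (0 : ℝ) < (m : ℝ) := by exact_mod_cast hm
    have hqm1 : 1 ≤ q * m := Nat.one_le_iff_ne_zero.2 (by positivity)
    have hAbound : a (q * m) ≤ (q : ℝ) * a m + 12 * ((q : ℝ) * m) * T m := by
      have h := lemA q m hm hq1
      have h2 : 0 ≤ T (2 * q * m) := hT0 _
      have h3 : (0 : ℝ) ≤ (q : ℝ) * m := by positivity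
      nlinarith [h, h2, mul_nonneg h3 h2]
    have hsplit : a n ≤ a (q * m) + a r + φ n := by
      rcases Nat.eq_zero_or_pos r with hr0 | hrpos
      · have : q * m = n := by rw [mul_comm]; omega
        rw [this]
        have := ha r
        have := hφ0 n
        linarith
      · have h := hsub (q * m) r hqm1 hrpos
        have he : q * m + r = n := by rw [mul_comm]; omega
        rwa [he] at h
    have har : a r ≤ A m := Finset.single_le_sum (fun i _ => ha i)
      (Finset.mem_range.2 hrm)
    have hqmn : ((q : ℝ) * m) ≤ (n : ℝ) := by
      have : q * m ≤ n := by rw [mul_comm]; omega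
      exact_mod_cast this
    have hkey1 : (q : ℝ) * a m ≤ (n : ℝ) * (a m / m) := by
      have h := mul_le_mul_of_nonneg_right hqmn (div_nonneg (ha m) hmpos.le)
      calc (q : ℝ) * a m = (q : ℝ) * m * (a m / m) := by field_simp
        _ ≤ (n : ℝ) * (a m / m) := h
    have hkey2 : 12 * ((q : ℝ) * m) * T m ≤ 12 * (n : ℝ) * T m := by
      nlinarith [hT0 m, hqmn]
    have htotal : a n ≤ (n : ℝ) * (a m / m) + 12 * (n : ℝ) * T m + A m + φ n := by
      linarith
    calc a n / n ≤ ((n : ℝ) * (a m / m) + 12 * (n : ℝ) * T m + A m + φ n) / n := by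
          gcongr
      _ = a m / m + 12 * T m + (A m / n + φ n / n) := by
          field_simp; ring
  -- φ n / n tends to 0
  have hφn0 : ∀ n : ℕ, 1 ≤ n → φ n / n ≤ 4 * T n := by
    intro n hn
    have h := hchunk n hn n (2 * n) le_rfl le_rfl
    have h2 : 0 ≤ T (2 * n) := hT0 _
    have hnpos : (0 : ℝ) < (n : ℝ) := by exact_mod_cast hn
    rw [div_le_iff₀ hnpos]
    rw [div_le_iff₀ (by positivity : (0:ℝ) < 4 * (n:ℝ))] at h
    nlinarith
  have hφtend : Filter.Tendsto (fun n : ℕ => φ n / n) Filter.atTop (nhds 0) := by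
    apply squeeze_zero' (f := fun n : ℕ => φ n / n) (g := fun n : ℕ => 4 * T n)
    · filter_upwards with n
      exact div_nonneg (hφ0 n) (Nat.cast_nonneg n)
    · filter_upwards [Filter.eventually_ge_atTop 1] with n hn
      exact hφn0 n hn
    · have := hTtendsto.const_mul (4 : ℝ)
      simpa using this
  -- define the limit
  set b : ℕ → ℝ := fun m => a m / m + 12 * T m with hb_def
  have hb0 : ∀ m, 0 ≤ b m := by
    intro m
    have h1 : 0 ≤ a m / m := div_nonneg (ha m) (Nat.cast_nonneg m)
    have h2 : 0 ≤ T m := hT0 m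
    simp only [hb_def]
    linarith
  have hbdd : BddBelow (Set.range fun m : ℕ => b (m + 1)) := by
    refine ⟨0, ?_⟩
    rintro x ⟨m, rfl⟩
    exact hb0 _
  set L : ℝ := ⨅ m : ℕ, b (m + 1) with hL_def
  have hL_le : ∀ m : ℕ, L ≤ b (m + 1) := fun m => ciInf_le hbdd m
  refine ⟨L, ?_⟩
  rw [Metric.tendsto_atTop]
  intro ε hε
  -- choose a good m
  obtain ⟨m, hmlt⟩ : ∃ m : ℕ, b (m + 1) < L + ε / 2 := by
    apply exists_lt_of_ciInf_lt
    rw [← hL_def]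
    linarith
  -- eventual upper bound
  have hAφ : Filter.Tendsto (fun n : ℕ => A (m + 1) / n + φ n / n) Filter.atTop (nhds 0) := by
    have h1 := tendsto_const_div_atTop_nhds_zero_nat (A (m + 1))
    have := h1.add hφtend
    simpa using this
  have hev1 : ∀ᶠ n : ℕ in Filter.atTop, A (m + 1) / n + φ n / n < ε / 2 :=
    hAφ.eventually_lt_const (by linarith)
  have hev2 : ∀ᶠ n : ℕ in Filter.atTop, m + 1 ≤ n := Filter.eventually_ge_atTop (m + 1)
  have hev3 : ∀ᶠ n : ℕ in Filter.atTop, 12 * T n < ε := by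
    have := hTtendsto.const_mul (12 : ℝ)
    simp only [mul_zero] at this
    exact this.eventually_lt_const hε
  have hev4 : ∀ᶠ n : ℕ in Filter.atTop, 1 ≤ n := Filter.eventually_ge_atTop 1
  have hev : ∀ᶠ n : ℕ in Filter.atTop, dist (a n / n) L < ε := by
    filter_upwards [hev1, hev2, hev3, hev4] with n h1 h2 h3 h4
    have hup : a n / n < L + ε := by
      have hst := step1 (m + 1) n (by omega) h2
      have hbval : b (m + 1) = a (m + 1) / ((m + 1 : ℕ) : ℝ) + 12 * T (m + 1) := rfl
      linarith [hst, h1, hmlt, hbval]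
    have hlow : L - ε < a n / n := by
      have hLn : L ≤ b n := by
        have := hL_le (n - 1)
        have he : n - 1 + 1 = n := by omega
        rwa [he] at this
      have hbn : b n = a n / n + 12 * T n := rfl
      rw [hbn] at hLn
      linarith
    rw [Real.dist_eq, abs_sub_lt_iff]
    constructor <;> linarith
  rw [Filter.eventually_atTop] at hev
  obtain ⟨N, hN⟩ := hev
  exact ⟨N, hN⟩
end
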